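/- Let H be a free module over a commutative ℚ-algebra R, and let ∇ be an F-bundle connection on H ⊗ R[[t₁,…,t_n,u]] whose (T)-structure part is in framed form ∇_{∂_{t_i}} = ∂_{t_i} + u⁻¹T_i(t) with T_i independent of u, and ∇_{∂_u} = ∂_u + u⁻²U(t,u) with U(t,u) = ∑_{k≥0} U_{k−2}(t)u^k. If the flatness equations ∂_{t_i}U_k = −[T_i, U_{k+1}] hold for all k ≥ 0 and U_k(0) = 0 for all k ≥ 0, then U_k(t) = 0 for all k ≥ 0; that is, the framing of the (T)-structure is automatically a framing of the F-bundle provided it is one at t = 0. -/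

import Mathlib

/-!
By induction on `N`, every `U k` has order at least `N`: the partial derivatives of `U k` are
commutators with `U (k + 1)`, hence of order at least `N`, and a power series with vanishing
constant term whose partial derivatives all have order at least `N` has order at least `N + 1`,
since over a `ℚ`-algebra each coefficient is a derivative coefficient divided by a positive
integer.
-/

noncomputable section

/-- The formal partial derivative of a multivariate formal power series in the `i`-th
variable, defined coefficientwise. -/
def fpderiv {m : ℕ} {A : Type*} [Ring A] (i : Fin m) (f : MvPowerSeries (Fin m) A) :
    MvPowerSeries (Fin m) A :=
  fun k => ((k i : ℕ) + 1) • f (k + Finsupp.single i 1)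

theorem IsAddTorsionFree.of_algebra_rat (R M : Type*) [Semiring R] [Algebra ℚ R]
    [AddCommGroup M] [Module R M] : IsAddTorsionFree M :=
  letI := Module.compHom M (algebraMap ℚ R)
  .of_module_rat M

namespace MvPowerSeries

variable {m : ℕ} {A : Type*} [Ring A]

theorem coeff_fpderiv (i : Fin m) (f : MvPowerSeries (Fin m) A) (d : Fin m →₀ ℕ) :
    coeff d (fpderiv i f) = (d i + 1) • coeff (d + Finsupp.single i 1) f :=
  rfl

theorem order_le_order_mul_sub_mul (a g : MvPowerSeries (Fin m) A) :
    g.order ≤ (a * g - g * a).order :=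
  calc g.order ≤ min (a * g).order (-(g * a)).order := by
        rw [order_neg]
        exact le_min (le_add_self.trans le_order_mul) (le_self_add.trans le_order_mul)
    _ ≤ (a * g - g * a).order := by rw [sub_eq_add_neg]; exact min_order_le_add

theorem succ_le_order_of_le_order_fpderiv [IsAddTorsionFree A] {f : MvPowerSeries (Fin m) A}
    (hf : constantCoeff f = 0) {N : ℕ} (h : ∀ i, (N : ℕ∞) ≤ (fpderiv i f).order) :
    ((N + 1 : ℕ) : ℕ∞) ≤ f.order := by
  refine nat_le_order fun d hd => ?_
  rcases eq_or_ne d 0 with rfl | hd0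
  · simpa using hf
  obtain ⟨i, hi⟩ := Finsupp.ne_iff.mp hd0
  obtain ⟨d', rfl⟩ : ∃ d', d = d' + Finsupp.single i 1 :=
    ⟨d - Finsupp.single i 1, (tsub_add_cancel_of_le (Finsupp.single_le_iff.mpr
      (Nat.one_le_iff_ne_zero.mpr hi))).symm⟩
  have hd' : (d'.degree : ℕ∞) < N := by
    rw [map_add, Finsupp.degree_single] at hd
    exact_mod_cast (by omega : d'.degree < N)
  refine IsAddTorsionFree.nsmul_right_injective (Nat.succ_ne_zero (d' i)) ?_
  simpa [coeff_fpderiv] using coeff_of_lt_order (hd'.trans_le (h i))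

theorem eq_zero_of_fpderiv_eq_neg_commutator [IsAddTorsionFree A]
    (T : Fin m → MvPowerSeries (Fin m) A) (U : ℕ → MvPowerSeries (Fin m) A)
    (hU : ∀ i k, fpderiv i (U k) = -(T i * U (k + 1) - U (k + 1) * T i))
    (h0 : ∀ k, constantCoeff (U k) = 0) (k : ℕ) : U k = 0 := by
  suffices h : ∀ N : ℕ, ∀ k, (N : ℕ∞) ≤ (U k).order from
    order_eq_top_iff.mp (ENat.eq_top_iff_forall_ge.mpr fun N => h N k)
  intro N
  induction N with
  | zero => simp
  | succ N ih =>
    intro k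
    refine succ_le_order_of_le_order_fpderiv (h0 k) fun i => ?_
    rw [hU, order_neg]
    exact (ih (k + 1)).trans (order_le_order_mul_sub_mul _ _)

end MvPowerSeries

theorem stmt16_general {n : ℕ} {R : Type*} [CommRing R] [Algebra ℚ R]
    {H : Type*} [AddCommGroup H] [Module R H]
    (T : Fin n → MvPowerSeries (Fin n) (Module.End R H))
    (U : ℕ → MvPowerSeries (Fin n) (Module.End R H))
    (hU : ∀ (i : Fin n) (k : ℕ),
      fpderiv i (U k) = -(T i * U (k + 1) - U (k + 1) * T i))
    (h0 : ∀ k, MvPowerSeries.constantCoeff (U k) = 0) :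
    ∀ k, U k = 0 := by
  have := IsAddTorsionFree.of_algebra_rat R (Module.End R H)
  exact MvPowerSeries.eq_zero_of_fpderiv_eq_neg_commutator T U hU h0

theorem stmt16 {n : ℕ} {R : Type*} [CommRing R] [Algebra ℚ R]
    {H : Type*} [AddCommGroup H] [Module R H] [Module.Free R H]
    (T : Fin n → MvPowerSeries (Fin n) (Module.End R H))
    (hcomm : ∀ i j, T i * T j = T j * T i)
    (hflat : ∀ i j, fpderiv i (T j) = fpderiv j (T i))
    (U : ℕ → MvPowerSeries (Fin n) (Module.End R H))
    (hU : ∀ (i : Fin n) (k : ℕ),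
      fpderiv i (U k) = -(T i * U (k + 1) - U (k + 1) * T i))
    (h0 : ∀ k, MvPowerSeries.constantCoeff (U k) = 0) :
    ∀ k, U k = 0 :=
  stmt16_general T U hU h0
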